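/- arXiv:1811.00620 — 4 statements merged into one kernel-verified Lean document; each statement's English description precedes it below -/
import Mathlib

section
/- Let C be a nonempty closed convex subset of ℝ^n with Π_C its orthogonal projection, and define P(z, g, η) := (1/η)(z − Π_C(z − η g)) for η > 0. Let F : ℝ^n → ℝ be differentiable with Q-Lipschitz gradient (Q > 0). For any z ∈ C and η > 0, let z⁺ := Π_C(z − η ∇F(z)). Then F(z⁺) ≤ F(z) − η⟨∇F(z), P(z, ∇F(z), η)⟩ + (Qη²/2)·‖P(z, ∇F(z), η)‖², and consequently F(z⁺) ≤ F(z) − (η − Qη²/2)·‖P(z, ∇F(z), η)‖². -/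
/-!
The step `z⁺ = Π_C(z - η ∇F(z))` equals `z - η P` with `P` the projected gradient, so the
first inequality is the descent lemma `F y ≤ F x + ⟪∇F x, y - x⟫ + Q/2 ‖y - x‖²` at `x = z`,
`y = z⁺`. The descent lemma holds because `t ↦ F (x + t (y - x)) - t ⟪∇F x, y - x⟫ - Q t²/2 ‖y - x‖²`
has nonpositive derivative on `t ≥ 0`. The second inequality follows from `‖P‖² ≤ ⟪∇F z, P⟫`,
which is the variational inequality of the projection tested at the point `z ∈ C`.
-/

open scoped InnerProductSpace

section

variable {E : Type*} [NormedAddCommGroup E] [InnerProductSpace ℝ E]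

theorem hasDerivAt_comp_add_smul_of_hasGradientAt [CompleteSpace E] {F : E → ℝ} {g x v : E}
    {t : ℝ} (hF : HasGradientAt F g (x + t • v)) :
    HasDerivAt (fun s : ℝ => F (x + s • v)) ⟪g, v⟫_ℝ t := by
  have hline : HasDerivAt (fun s : ℝ => x + s • v) v t := by
    simpa using ((hasDerivAt_id t).smul_const v).const_add x
  exact hF.hasFDerivAt.comp_hasDerivAt t hline

theorem apply_le_add_inner_gradient_add_sq_norm [CompleteSpace E] {F : E → ℝ}
    (hF : Differentiable ℝ F) {Q : ℝ}
    (hlip : ∀ x y, ‖gradient F x - gradient F y‖ ≤ Q * ‖x - y‖) (x y : E) :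
    F y ≤ F x + ⟪gradient F x, y - x⟫_ℝ + Q / 2 * ‖y - x‖ ^ 2 := by
  set v := y - x
  set φ : ℝ → ℝ := fun t => F (x + t • v) - t * ⟪gradient F x, v⟫_ℝ - Q / 2 * t ^ 2 * ‖v‖ ^ 2
  have hφ : ∀ t, HasDerivAt φ
      (⟪gradient F (x + t • v) - gradient F x, v⟫_ℝ - Q * t * ‖v‖ ^ 2) t := by
    intro t
    have hFt := hasDerivAt_comp_add_smul_of_hasGradientAt (hF (x + t • v)).hasGradientAt
    refine ((hFt.sub ((hasDerivAt_id t).mul_const ⟪gradient F x, v⟫_ℝ)).sub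
      (((hasDerivAt_pow 2 t).const_mul (Q / 2)).mul_const (‖v‖ ^ 2))).congr_deriv ?_
    rw [inner_sub_left]
    ring
  have hderiv_nonpos : ∀ t ∈ interior (Set.Ici (0 : ℝ)), deriv φ t ≤ 0 := by
    intro t ht
    rw [interior_Ici, Set.mem_Ioi] at ht
    have hstep : ‖(x + t • v) - x‖ = t * ‖v‖ := by
      rw [add_sub_cancel_left, norm_smul, Real.norm_of_nonneg ht.le]
    calc deriv φ t
        = ⟪gradient F (x + t • v) - gradient F x, v⟫_ℝ - Q * t * ‖v‖ ^ 2 := (hφ t).deriv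
      _ ≤ ‖gradient F (x + t • v) - gradient F x‖ * ‖v‖ - Q * t * ‖v‖ ^ 2 := by
          gcongr; exact real_inner_le_norm _ _
      _ ≤ Q * ‖(x + t • v) - x‖ * ‖v‖ - Q * t * ‖v‖ ^ 2 := by gcongr; exact hlip _ _
      _ = 0 := by rw [hstep]; ring
  have hanti : AntitoneOn φ (Set.Ici 0) :=
    antitoneOn_of_deriv_nonpos (convex_Ici 0)
      (fun t _ => (hφ t).continuousAt.continuousWithinAt)
      (fun t _ => (hφ t).differentiableAt.differentiableWithinAt) hderiv_nonpos
  have h10 : φ 1 ≤ φ 0 := hanti Set.self_mem_Ici (Set.mem_Ici.2 zero_le_one) zero_le_one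
  simp only [φ, one_smul, zero_smul, add_zero, add_sub_cancel, v] at h10
  linarith

theorem Convex.inner_sub_sub_nonpos_of_forall_norm_sub_le {K : Set E} (hK : Convex ℝ K)
    {u p w : E} (hp : p ∈ K) (hmin : ∀ w ∈ K, ‖u - p‖ ≤ ‖u - w‖) (hw : w ∈ K) :
    ⟪u - p, w - p⟫_ℝ ≤ 0 := by
  have : Nonempty K := ⟨⟨p, hp⟩⟩
  have hinf : ‖u - p‖ = ⨅ w : K, ‖u - w‖ :=
    le_antisymm (le_ciInf fun w => hmin w w.2)
      (ciInf_le ⟨0, Set.forall_mem_range.2 fun _ => norm_nonneg _⟩ (⟨p, hp⟩ : K))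
  exact (norm_eq_iInf_iff_real_inner_le_zero hK hp).1 hinf w hw

noncomputable def projectedGradient (proj : E → E) (z g : E) (η : ℝ) : E :=
  η⁻¹ • (z - proj (z - η • g))

theorem projectedGradient_step (proj : E → E) (z g : E) {η : ℝ} (hη : η ≠ 0) :
    proj (z - η • g) = z - η • projectedGradient proj z g η := by
  rw [projectedGradient, smul_smul, mul_inv_cancel₀ hη, one_smul, sub_sub_cancel]

theorem norm_projectedGradient_sq_le_inner {K : Set E} (hK : Convex ℝ K) {proj : E → E}
    (hmem : ∀ x, proj x ∈ K) (hnear : ∀ x, ∀ w ∈ K, ‖x - proj x‖ ≤ ‖x - w‖)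
    {z : E} (hz : z ∈ K) (g : E) {η : ℝ} (hη : 0 < η) :
    ‖projectedGradient proj z g η‖ ^ 2 ≤ ⟪g, projectedGradient proj z g η⟫_ℝ := by
  set P := projectedGradient proj z g η
  have hvar := hK.inner_sub_sub_nonpos_of_forall_norm_sub_le (hmem (z - η • g))
    (hnear (z - η • g)) hz
  rw [projectedGradient_step proj z g hη.ne', sub_sub_cancel,
    show z - η • g - (z - η • P) = η • (P - g) by rw [smul_sub]; abel,
    real_inner_smul_left, real_inner_smul_right, inner_sub_left,
    real_inner_self_eq_norm_sq] at hvar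
  have hη2 : 0 < η * η := mul_pos hη hη
  nlinarith

theorem apply_proj_sub_smul_gradient_le [CompleteSpace E] {K : Set E} (hK : Convex ℝ K)
    {proj : E → E} (hmem : ∀ x, proj x ∈ K) (hnear : ∀ x, ∀ w ∈ K, ‖x - proj x‖ ≤ ‖x - w‖)
    {F : E → ℝ} (hF : Differentiable ℝ F) {Q : ℝ}
    (hlip : ∀ x y, ‖gradient F x - gradient F y‖ ≤ Q * ‖x - y‖)
    {z : E} (hz : z ∈ K) {η : ℝ} (hη : 0 < η) :
    F (proj (z - η • gradient F z))
      ≤ F z - η * ⟪gradient F z, projectedGradient proj z (gradient F z) η⟫_ℝ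
        + (Q * η ^ 2 / 2) * ‖projectedGradient proj z (gradient F z) η‖ ^ 2
    ∧ F (proj (z - η • gradient F z))
      ≤ F z - (η - Q * η ^ 2 / 2) * ‖projectedGradient proj z (gradient F z) η‖ ^ 2 := by
  set P := projectedGradient proj z (gradient F z) η
  have hdescent : F (proj (z - η • gradient F z))
      ≤ F z - η * ⟪gradient F z, P⟫_ℝ + (Q * η ^ 2 / 2) * ‖P‖ ^ 2 := by
    have h := apply_le_add_inner_gradient_add_sq_norm hF hlip z (proj (z - η • gradient F z))
    rw [projectedGradient_step proj z _ hη.ne', sub_sub_cancel_left, inner_neg_right,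
      norm_neg, real_inner_smul_right, norm_smul, Real.norm_of_nonneg hη.le, mul_pow] at h
    rw [projectedGradient_step proj z _ hη.ne']
    linarith
  have hP : ‖P‖ ^ 2 ≤ ⟪gradient F z, P⟫_ℝ :=
    norm_projectedGradient_sq_le_inner hK hmem hnear hz _ hη
  refine ⟨hdescent, ?_⟩
  nlinarith [mul_le_mul_of_nonneg_left hP hη.le]

end

theorem projected_gradient_descent_lemma_general {n : ℕ}
    (C : Set (EuclideanSpace ℝ (Fin n)))
    (hcv : Convex ℝ C)
    (proj : EuclideanSpace ℝ (Fin n) → EuclideanSpace ℝ (Fin n))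
    (hprojmem : ∀ x, proj x ∈ C)
    (hprojnear : ∀ x, ∀ w ∈ C, ‖x - proj x‖ ≤ ‖x - w‖)
    (F : EuclideanSpace ℝ (Fin n) → ℝ) (hF : Differentiable ℝ F)
    (Q : ℝ)
    (hgradLip : ∀ x y, ‖gradient F x - gradient F y‖ ≤ Q * ‖x - y‖)
    (z : EuclideanSpace ℝ (Fin n)) (hz : z ∈ C) (η : ℝ) (hη : 0 < η) :
    F (proj (z - η • gradient F z))
      ≤ F z - η * ⟪gradient F z, η⁻¹ • (z - proj (z - η • gradient F z))⟫_ℝ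
        + (Q * η ^ 2 / 2) * ‖η⁻¹ • (z - proj (z - η • gradient F z))‖ ^ 2
    ∧ F (proj (z - η • gradient F z))
      ≤ F z - (η - Q * η ^ 2 / 2) * ‖η⁻¹ • (z - proj (z - η • gradient F z))‖ ^ 2 :=
  apply_proj_sub_smul_gradient_le hcv hprojmem hprojnear hF hgradLip hz hη

/-- descent inequality for a projected gradient step on a function with
`Q`-Lipschitz gradient, over a nonempty closed convex set `C`. -/
theorem projected_gradient_descent_lemma {n : ℕ}
    (C : Set (EuclideanSpace ℝ (Fin n))) (hne : C.Nonempty) (hcl : IsClosed C)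
    (hcv : Convex ℝ C)
    (proj : EuclideanSpace ℝ (Fin n) → EuclideanSpace ℝ (Fin n))
    (hprojmem : ∀ x, proj x ∈ C)
    (hprojnear : ∀ x, ∀ w ∈ C, ‖x - proj x‖ ≤ ‖x - w‖)
    (F : EuclideanSpace ℝ (Fin n) → ℝ) (hF : Differentiable ℝ F)
    (Q : ℝ) (hQ : 0 < Q)
    (hgradLip : ∀ x y, ‖gradient F x - gradient F y‖ ≤ Q * ‖x - y‖)
    (z : EuclideanSpace ℝ (Fin n)) (hz : z ∈ C) (η : ℝ) (hη : 0 < η) :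
    F (proj (z - η • gradient F z))
      ≤ F z - η * ⟪gradient F z, η⁻¹ • (z - proj (z - η • gradient F z))⟫_ℝ
        + (Q * η ^ 2 / 2) * ‖η⁻¹ • (z - proj (z - η • gradient F z))‖ ^ 2
    ∧ F (proj (z - η • gradient F z))
      ≤ F z - (η - Q * η ^ 2 / 2) * ‖η⁻¹ • (z - proj (z - η • gradient F z))‖ ^ 2 :=
  projected_gradient_descent_lemma_general C hcv proj hprojmem hprojnear F hF Q hgradLip z hz η hη
end

section
/- Let C be a nonempty closed convex subset of ℝ^n with Π_C its orthogonal projection, and define P(z, g, η) := (1/η)(z − Π_C(z − η g)) for η > 0. Let F : ℝ^n → ℝ be differentiable with Q-Lipschitz gradient (Q > 0), and let η ∈ (0, 2/Q). Then for any z ∈ C, with z⁺ := Π_C(z − η ∇F(z)), one has ‖P(z, ∇F(z), η)‖² ≤ (F(z) − F(z⁺)) / (η − Qη²/2). -/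
/-!
Since `z ∈ C`, the variational inequality of the projection `z⁺` of `z - η ∇F(z)` gives
`‖z - z⁺‖² ≤ η ⟪∇F(z), z - z⁺⟫`. The descent lemma for a `Q`-Lipschitz gradient bounds
`F(z⁺) ≤ F(z) - ⟪∇F(z), z - z⁺⟫ + (Q/2) ‖z - z⁺‖²`, so `F(z) - F(z⁺) ≥ (1/η - Q/2) ‖z - z⁺‖²`,
and `1/η - Q/2 > 0` exactly when `η < 2/Q`.
-/

open scoped RealInnerProductSpace

section Projection

variable {E : Type*} [NormedAddCommGroup E] [InnerProductSpace ℝ E]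

theorem inner_sub_le_zero_of_forall_norm_sub_le {K : Set E} (hK : Convex ℝ K) {u p : E}
    (hp : p ∈ K) (hnear : ∀ w ∈ K, ‖u - p‖ ≤ ‖u - w‖) {w : E} (hw : w ∈ K) :
    ⟪u - p, w - p⟫ ≤ 0 := by
  have : Nonempty K := ⟨⟨p, hp⟩⟩
  have hbdd : BddBelow (Set.range fun w : K => ‖u - w‖) :=
    ⟨0, by rintro _ ⟨w, rfl⟩; exact norm_nonneg _⟩
  have hinf : ‖u - p‖ = ⨅ w : K, ‖u - w‖ :=
    le_antisymm (le_ciInf fun w => hnear w w.2) (ciInf_le hbdd ⟨p, hp⟩)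
  exact (norm_eq_iInf_iff_real_inner_le_zero hK hp).1 hinf w hw

theorem sq_norm_sub_le_inner_of_forall_norm_sub_le {K : Set E} (hK : Convex ℝ K) {z g p : E}
    {η : ℝ} (hz : z ∈ K) (hp : p ∈ K) (hnear : ∀ w ∈ K, ‖z - η • g - p‖ ≤ ‖z - η • g - w‖) :
    ‖z - p‖ ^ 2 ≤ η * ⟪g, z - p⟫ := by
  have hvar := inner_sub_le_zero_of_forall_norm_sub_le hK hp hnear hz
  rw [show z - η • g - p = (z - p) - η • g by abel, inner_sub_left, real_inner_smul_left,
    real_inner_self_eq_norm_sq] at hvar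
  linarith

end Projection

section Descent

variable {E : Type*} [NormedAddCommGroup E] [InnerProductSpace ℝ E] [CompleteSpace E]
  {F : E → ℝ}

theorem hasDerivAt_comp_add_smul_gradient {x v : E} {t : ℝ}
    (hF : DifferentiableAt ℝ F (x + t • v)) :
    HasDerivAt (fun s : ℝ => F (x + s • v)) ⟪gradient F (x + t • v), v⟫ t := by
  have hline : HasDerivAt (fun s : ℝ => x + s • v) v t := by
    simpa using ((hasDerivAt_id t).smul_const v).const_add x
  exact (hasGradientAt_iff_hasFDerivAt.1 hF.hasGradientAt).comp_hasDerivAt t hline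

theorem inner_gradient_add_smul_le {Q : ℝ}
    (hgradLip : ∀ x y, ‖gradient F x - gradient F y‖ ≤ Q * ‖x - y‖) (x v : E) {t : ℝ}
    (ht : 0 ≤ t) :
    ⟪gradient F (x + t • v), v⟫ ≤ ⟪gradient F x, v⟫ + Q * t * ‖v‖ ^ 2 := by
  have hdiff : ⟪gradient F (x + t • v) - gradient F x, v⟫ ≤ Q * t * ‖v‖ ^ 2 :=
    calc ⟪gradient F (x + t • v) - gradient F x, v⟫
        ≤ ‖gradient F (x + t • v) - gradient F x‖ * ‖v‖ := real_inner_le_norm _ _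
      _ ≤ Q * ‖(x + t • v) - x‖ * ‖v‖ :=
          mul_le_mul_of_nonneg_right (hgradLip _ _) (norm_nonneg v)
      _ = Q * t * ‖v‖ ^ 2 := by
          rw [add_sub_cancel_left, norm_smul, Real.norm_of_nonneg ht]; ring
  rw [inner_sub_left] at hdiff
  linarith

theorem descent_lemma (hF : Differentiable ℝ F) {Q : ℝ}
    (hgradLip : ∀ x y, ‖gradient F x - gradient F y‖ ≤ Q * ‖x - y‖) (x y : E) :
    F y ≤ F x + ⟪gradient F x, y - x⟫ + Q / 2 * ‖y - x‖ ^ 2 := by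
  set v := y - x
  have hderiv (t : ℝ) := hasDerivAt_comp_add_smul_gradient (v := v) (t := t) (hF (x + t • v))
  have hbound (t : ℝ) :
      HasDerivAt (fun s : ℝ => F x + s * ⟪gradient F x, v⟫ + Q / 2 * s ^ 2 * ‖v‖ ^ 2)
        (⟪gradient F x, v⟫ + Q * t * ‖v‖ ^ 2) t := by
    refine ((((hasDerivAt_id t).mul_const _).const_add (F x)).add
      (((hasDerivAt_pow 2 t).const_mul (Q / 2)).mul_const (‖v‖ ^ 2))).congr_deriv ?_
    push_cast
    ring
  -- the slope of `t ↦ F (x + t • v)` never exceeds that of its quadratic model, which agrees at 0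
  have hfence := image_le_of_deriv_right_le_deriv_boundary (a := 0) (b := 1)
    (fun t _ => (hderiv t).continuousAt.continuousWithinAt)
    (fun t _ => (hderiv t).hasDerivWithinAt) (by simp)
    (fun t _ => (hbound t).continuousAt.continuousWithinAt)
    (fun t _ => (hbound t).hasDerivWithinAt)
    (fun t ht => inner_gradient_add_smul_le hgradLip x v ht.1)
    (Set.right_mem_Icc.2 zero_le_one)
  simpa [v] using hfence

theorem mul_sq_norm_inv_smul_sub_le_sub (hF : Differentiable ℝ F) {Q : ℝ}
    (hgradLip : ∀ x y, ‖gradient F x - gradient F y‖ ≤ Q * ‖x - y‖) {η : ℝ} (hη : 0 < η)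
    {z p : E} (hstep : ‖z - p‖ ^ 2 ≤ η * ⟪gradient F z, z - p⟫) :
    (η - Q * η ^ 2 / 2) * ‖η⁻¹ • (z - p)‖ ^ 2 ≤ F z - F p := by
  have hdesc := descent_lemma hF hgradLip z p
  rw [← neg_sub z p, inner_neg_right, norm_neg] at hdesc
  rw [norm_smul, Real.norm_of_nonneg (inv_nonneg.2 hη.le), mul_pow]
  have hscale : (η - Q * η ^ 2 / 2) * (η⁻¹ ^ 2 * ‖z - p‖ ^ 2)
      = (η⁻¹ - Q / 2) * ‖z - p‖ ^ 2 := by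
    field_simp
  have hinner : η⁻¹ * ‖z - p‖ ^ 2 ≤ ⟪gradient F z, z - p⟫ := by
    rwa [inv_mul_le_iff₀ hη]
  rw [hscale]
  linarith

end Descent

theorem sq_projected_gradient_le_decrease_general {n : ℕ}
    (C : Set (EuclideanSpace ℝ (Fin n)))
    (hcv : Convex ℝ C)
    (proj : EuclideanSpace ℝ (Fin n) → EuclideanSpace ℝ (Fin n))
    (hprojmem : ∀ x, proj x ∈ C)
    (hprojnear : ∀ x, ∀ w ∈ C, ‖x - proj x‖ ≤ ‖x - w‖)
    (F : EuclideanSpace ℝ (Fin n) → ℝ) (hF : Differentiable ℝ F)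
    (Q : ℝ) (hQ : 0 < Q)
    (hgradLip : ∀ x y, ‖gradient F x - gradient F y‖ ≤ Q * ‖x - y‖)
    (η : ℝ) (hη : 0 < η) (hη2 : η < 2 / Q)
    (z : EuclideanSpace ℝ (Fin n)) (hz : z ∈ C) :
    ‖η⁻¹ • (z - proj (z - η • gradient F z))‖ ^ 2
      ≤ (F z - F (proj (z - η • gradient F z))) / (η - Q * η ^ 2 / 2) := by
  have hpos : 0 < η - Q * η ^ 2 / 2 := by
    have : Q * η < 2 := by rwa [lt_div_iff₀ hQ, mul_comm] at hη2
    nlinarith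
  have hstep := sq_norm_sub_le_inner_of_forall_norm_sub_le (g := gradient F z) hcv hz
    (hprojmem _) (hprojnear (z - η • gradient F z))
  rw [le_div_iff₀ hpos, mul_comm]
  exact mul_sq_norm_inv_smul_sub_le_sub hF hgradLip hη hstep

/-- the squared norm of the projected gradient is bounded by the per-step
function decrease divided by `η - Qη²/2`, for `η ∈ (0, 2/Q)`. -/
theorem sq_projected_gradient_le_decrease {n : ℕ}
    (C : Set (EuclideanSpace ℝ (Fin n))) (hne : C.Nonempty) (hcl : IsClosed C)
    (hcv : Convex ℝ C)
    (proj : EuclideanSpace ℝ (Fin n) → EuclideanSpace ℝ (Fin n))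
    (hprojmem : ∀ x, proj x ∈ C)
    (hprojnear : ∀ x, ∀ w ∈ C, ‖x - proj x‖ ≤ ‖x - w‖)
    (F : EuclideanSpace ℝ (Fin n) → ℝ) (hF : Differentiable ℝ F)
    (Q : ℝ) (hQ : 0 < Q)
    (hgradLip : ∀ x y, ‖gradient F x - gradient F y‖ ≤ Q * ‖x - y‖)
    (η : ℝ) (hη : 0 < η) (hη2 : η < 2 / Q)
    (z : EuclideanSpace ℝ (Fin n)) (hz : z ∈ C) :
    ‖η⁻¹ • (z - proj (z - η • gradient F z))‖ ^ 2
      ≤ (F z - F (proj (z - η • gradient F z))) / (η - Q * η ^ 2 / 2) :=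
  sq_projected_gradient_le_decrease_general C hcv proj hprojmem hprojnear F hF Q hQ hgradLip η hη
    hη2 z hz
end

section
/- Let C be a nonempty compact convex subset of ℝ^n with Π_C its orthogonal projection, and define P(z, g, η) := (1/η)(z − Π_C(z − η g)) for η > 0. Let f : ℝ^n → ℝ be differentiable with continuous gradient ∇f. Then for every η > 0 there exists a point z* ∈ C such that P(z*, ∇f(z*), η) = 0, i.e., Π_C(z* − η ∇f(z*)) = z*. -/
/-!
A minimizer `z` of `f` on the compact set `C` exists, and by convexity of `C` it satisfies the
first-order condition `⟪∇f z, w - z⟫ ≥ 0` for all `w ∈ C`. For `x = z - η ∇f z` this is the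
variational inequality `⟪x - z, w - z⟫ ≤ 0` characterizing `z` as the unique nearest point of `C`
to `x`, so `Π_C x = z`.
-/

open scoped InnerProductSpace

variable {F : Type*} [NormedAddCommGroup F] [InnerProductSpace ℝ F]

theorem IsMinOn.inner_gradient_sub_nonneg [CompleteSpace F] {f : F → ℝ} {s : Set F} {z w : F}
    (hmin : IsMinOn f s z) (hs : Convex ℝ s) (hf : DifferentiableAt ℝ f z) (hz : z ∈ s)
    (hw : w ∈ s) : 0 ≤ ⟪gradient f z, w - z⟫_ℝ := by
  have h := hmin.localize.hasFDerivWithinAt_nonneg hf.hasFDerivAt.hasFDerivWithinAt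
    (sub_mem_posTangentConeAt_of_segment_subset (hs.segment_subset hz hw))
  simpa [gradient] using h

theorem eq_of_norm_sub_le_of_inner_sub_nonpos {s : Set F} {x z p : F}
    (hz : ∀ w ∈ s, ⟪x - z, w - z⟫_ℝ ≤ 0) (hp : p ∈ s) (hnear : ‖x - p‖ ≤ ‖x - z‖) :
    p = z := by
  have hsplit : ‖x - p‖ ^ 2 = ‖x - z‖ ^ 2 - 2 * ⟪x - z, p - z⟫_ℝ + ‖p - z‖ ^ 2 := by
    rw [← norm_sub_sq_real, sub_sub_sub_cancel_right]
  have hsq : ‖x - p‖ ^ 2 ≤ ‖x - z‖ ^ 2 := pow_le_pow_left₀ (norm_nonneg _) hnear 2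
  have hzero : ‖p - z‖ ^ 2 ≤ 0 := by linarith [hz p hp]
  rw [← sub_eq_zero, ← norm_eq_zero, ← sq_eq_zero_iff]
  exact le_antisymm hzero (sq_nonneg _)

theorem exists_projected_gradient_zero_general {n : ℕ}
    (C : Set (EuclideanSpace ℝ (Fin n))) (hne : C.Nonempty) (hcpt : IsCompact C)
    (hcv : Convex ℝ C)
    (proj : EuclideanSpace ℝ (Fin n) → EuclideanSpace ℝ (Fin n))
    (hprojmem : ∀ x, proj x ∈ C)
    (hprojnear : ∀ x, ∀ w ∈ C, ‖x - proj x‖ ≤ ‖x - w‖)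
    (f : EuclideanSpace ℝ (Fin n) → ℝ) (hf : Differentiable ℝ f) :
    ∀ η : ℝ, 0 < η → ∃ z ∈ C,
      η⁻¹ • (z - proj (z - η • gradient f z)) = 0 ∧
      proj (z - η • gradient f z) = z := by
  intro η hη
  obtain ⟨z, hzC, hmin⟩ := hcpt.exists_isMinOn hne hf.continuous.continuousOn
  have hvi : ∀ w ∈ C, ⟪(z - η • gradient f z) - z, w - z⟫_ℝ ≤ 0 := fun w hw => by
    rw [sub_sub_cancel_left, inner_neg_left, real_inner_smul_left, neg_nonpos]
    exact mul_nonneg hη.le (hmin.inner_gradient_sub_nonneg hcv (hf z) hzC hw)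
  have hfix : proj (z - η • gradient f z) = z :=
    eq_of_norm_sub_le_of_inner_sub_nonpos hvi (hprojmem _) (hprojnear _ z hzC)
  exact ⟨z, hzC, by rw [hfix, sub_self, smul_zero], hfix⟩

/-- on a nonempty compact convex set, a differentiable function with
continuous gradient admits a stationary point of the projected gradient step: a point
`z* ∈ C` fixed by `z ↦ Π_C (z - η ∇f z)`, i.e. with vanishing projected gradient. -/
theorem exists_projected_gradient_zero {n : ℕ}
    (C : Set (EuclideanSpace ℝ (Fin n))) (hne : C.Nonempty) (hcpt : IsCompact C)
    (hcv : Convex ℝ C)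
    (proj : EuclideanSpace ℝ (Fin n) → EuclideanSpace ℝ (Fin n))
    (hprojmem : ∀ x, proj x ∈ C)
    (hprojnear : ∀ x, ∀ w ∈ C, ‖x - proj x‖ ≤ ‖x - w‖)
    (f : EuclideanSpace ℝ (Fin n) → ℝ) (hf : Differentiable ℝ f)
    (hgradcont : Continuous fun x => gradient f x) :
    ∀ η : ℝ, 0 < η → ∃ z ∈ C,
      η⁻¹ • (z - proj (z - η • gradient f z)) = 0 ∧
      proj (z - η • gradient f z) = z :=
  exists_projected_gradient_zero_general C hne hcpt hcv proj hprojmem hprojnear f hf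
end

section
/- Let H be a real inner product space, let φ_1, …, φ_N ∈ H, let y ∈ ℝ^N, and let λ > 0. Define the regularized least-squares objective G(w) := Σ_{t=1}^{N} (y_t − ⟨φ_t, w⟩)² + λ‖w‖² for w ∈ H. If w* ∈ H is a minimizer of G (i.e., G(w*) ≤ G(w) for all w ∈ H), then w* lies in the linear span of {φ_1, …, φ_N}; equivalently, there exist coefficients θ_1, …, θ_N ∈ ℝ such that w* = Σ_{j=1}^{N} θ_j φ_j. -/
/-!
Let `P` be the orthogonal projection onto `K = span {φ_t}`. The data-fit term only sees the
inner products `⟪φ_t, w⟫ = ⟪φ_t, P w⟫`, while `‖P w‖ ≤ ‖w‖`; so if `w` minimizes the objective,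
comparing with `P w` forces `‖P w‖ = ‖w‖`, i.e. `w ∈ K`.
-/

open scoped InnerProductSpace

namespace Submodule

variable {𝕜 E : Type*} [RCLike 𝕜] [NormedAddCommGroup E] [InnerProductSpace 𝕜 E]
  (K : Submodule 𝕜 E) [K.HasOrthogonalProjection]

theorem inner_starProjection_right_of_mem {u : E} (hu : u ∈ K) (v : E) :
    ⟪u, K.starProjection v⟫_𝕜 = ⟪u, v⟫_𝕜 := by
  rw [← inner_starProjection_left_eq_right, starProjection_eq_self_iff.mpr hu]

theorem mem_of_forall_le_add_mul_norm_sq {L : E → ℝ} (hL : ∀ v, L (K.starProjection v) = L v)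
    {l : ℝ} (hl : 0 < l) {w : E} (hmin : ∀ v, L w + l * ‖w‖ ^ 2 ≤ L v + l * ‖v‖ ^ 2) :
    w ∈ K := by
  have hcompare := hmin (K.starProjection w)
  rw [hL] at hcompare
  have hle : ‖w‖ ≤ ‖K.starProjection w‖ := by
    have : ‖w‖ ^ 2 ≤ ‖K.starProjection w‖ ^ 2 := le_of_mul_le_mul_left (by linarith) hl
    exact (pow_le_pow_iff_left₀ (norm_nonneg _) (norm_nonneg _) two_ne_zero).mp this
  exact (K.mem_iff_norm_starProjection w).mpr (le_antisymm (K.norm_starProjection_apply_le w) hle)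

end Submodule

/-- Representer theorem: any minimizer of the regularized least-squares
objective `G(w) = Σ_t (y_t - ⟪φ_t, w⟫)² + λ‖w‖²` over a real inner product space lies
in the span of the feature vectors `φ_1, …, φ_N`. -/
theorem representer_theorem {H : Type*} [NormedAddCommGroup H] [InnerProductSpace ℝ H]
    {N : ℕ} (φ : Fin N → H) (y : Fin N → ℝ) (l : ℝ) (hl : 0 < l)
    (w : H)
    (hmin : ∀ v : H,
      (∑ t, (y t - ⟪φ t, w⟫_ℝ) ^ 2) + l * ‖w‖ ^ 2
        ≤ (∑ t, (y t - ⟪φ t, v⟫_ℝ) ^ 2) + l * ‖v‖ ^ 2) :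
    ∃ θ : Fin N → ℝ, w = ∑ j, θ j • φ j := by
  set K := Submodule.span ℝ (Set.range φ)
  have : FiniteDimensional ℝ K := .span_of_finite ℝ (Set.finite_range φ)
  have hdata (v : H) :
      ∑ t, (y t - ⟪φ t, K.starProjection v⟫_ℝ) ^ 2 = ∑ t, (y t - ⟪φ t, v⟫_ℝ) ^ 2 := by
    simp only [K.inner_starProjection_right_of_mem (Submodule.subset_span (Set.mem_range_self _))]
  have hw : w ∈ K :=
    K.mem_of_forall_le_add_mul_norm_sq (L := fun v ↦ ∑ t, (y t - ⟪φ t, v⟫_ℝ) ^ 2) hdata hl hmin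
  obtain ⟨θ, hθ⟩ := Submodule.mem_span_range_iff_exists_fun ℝ |>.mp hw
  exact ⟨θ, hθ.symm⟩
end
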